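/- arXiv:2005.05058 — 9 statements merged into one kernel-verified Lean document; each statement's English description precedes it below -/
import Mathlib

section
/- Let f : (0,∞) → (0,∞) satisfy that f(V)/V is nonincreasing (equivalently V·f'(V) ≤ f(V) when f is differentiable with f'>0). Let Φ(x) = x - 1 - ln x. Then for any V, V* > 0, Φ(f(V)/f(V*)) - Φ(V/V*) ≤ (f(V)/f(V*) - V/V*)(1 - f(V*)/f(V)) ≤ 0. -/
/-- For a positive increasing incidence function f on (0,∞) with f(V)/V
nonincreasing, and Φ(x) = x - 1 - ln x, for any V, V* > 0 we have
Φ(f(V)/f(V*)) - Φ(V/V*) ≤ (f(V)/f(V*) - V/V*)(1 - f(V*)/f(V)) ≤ 0. -/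
theorem volterra_incidence_inequality
    (f : ℝ → ℝ) (Φ : ℝ → ℝ)
    (hΦ : ∀ x, Φ x = x - 1 - Real.log x)
    (hfpos : ∀ V > (0:ℝ), 0 < f V)
    (hmono : MonotoneOn f (Set.Ioi (0:ℝ)))
    (hratio : AntitoneOn (fun V => f V / V) (Set.Ioi (0:ℝ))) :
    ∀ V > (0:ℝ), ∀ Vs > (0:ℝ),
      Φ (f V / f Vs) - Φ (V / Vs) ≤ (f V / f Vs - V / Vs) * (1 - f Vs / f V) ∧
      (f V / f Vs - V / Vs) * (1 - f Vs / f V) ≤ 0 := by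
  intro V hV Vs hVs
  have hfV := hfpos V hV
  have hfVs := hfpos Vs hVs
  have hapos : 0 < f V / f Vs := div_pos hfV hfVs
  have hbpos : 0 < V / Vs := div_pos hV hVs
  constructor
  · rw [hΦ, hΦ]
    have hba : 0 < (V / Vs) / (f V / f Vs) := div_pos hbpos hapos
    have hlog := Real.log_le_sub_one_of_pos hba
    have hneg : Real.log ((V / Vs) / (f V / f Vs))
        = Real.log (V / Vs) - Real.log (f V / f Vs) :=
      Real.log_div (ne_of_gt hbpos) (ne_of_gt hapos)
    rw [hneg] at hlog
    -- hlog : log b - log a ≤ b/a - 1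
    have key : (V / Vs) / (f V / f Vs) = (V / Vs) * (f Vs / f V) := by
      field_simp
    rw [key] at hlog
    have hac : (f V / f Vs) * (f Vs / f V) = 1 := by field_simp
    nlinarith [hac, hlog]
  · rcases le_total V Vs with h | h
    · have h1 : f V ≤ f Vs := hmono hV hVs h
      have h2 : f Vs / Vs ≤ f V / V := hratio hV hVs h
      have ha1 : f V / f Vs ≤ 1 := (div_le_one hfVs).2 h1
      have hfa : 1 - f Vs / f V ≤ 0 := by
        have : (1:ℝ) ≤ f Vs / f V := (one_le_div hfV).2 h1
        linarith
      have hab : V / Vs ≤ f V / f Vs := by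
        rw [div_le_div_iff₀ hVs hfVs]
        rw [div_le_div_iff₀ hVs hV] at h2
        nlinarith
      exact mul_nonpos_of_nonneg_of_nonpos (by linarith) hfa
    · have h1 : f Vs ≤ f V := hmono hVs hV h
      have h2 : f V / V ≤ f Vs / Vs := hratio hVs hV h
      have hfa : 0 ≤ 1 - f Vs / f V := by
        have : f Vs / f V ≤ 1 := (div_le_one hfV).2 h1
        linarith
      have hab : f V / f Vs ≤ V / Vs := by
        rw [div_le_div_iff₀ hfVs hVs]
        rw [div_le_div_iff₀ hV hVs] at h2
        nlinarith
      exact mul_nonpos_of_nonpos_of_nonneg (by linarith) hfa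
end

section
/- Let Λ, d_S, γ, d_I, α, d_V > 0, and let f, g : [0,∞) → ℝ be differentiable with f(0)=g(0)=0, f,g > 0 on (0,∞), f', g' > 0, and f(V)/V, g(I)/I nonincreasing on (0,∞). Define S₀ = Λ/d_S and R₀ = S₀·α·f'(0)/(d_V(γ+d_I)) + S₀·g'(0)/(γ+d_I). If R₀ > 1, then the function G(I) = ((Λ - (γ+d_I)I)/d_S)·(f(αI/d_V) + g(I)) - (γ+d_I)I has at least one root I* in the open interval (0, Λ/(γ+d_I)). -/
/-- If R₀ > 1, the equilibrium equation G(I) = 0 has a root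
I* ∈ (0, Λ/(γ+d_I)). -/
theorem endemic_equilibrium_exists
    (Λ dS γ dI α dV : ℝ)
    (hΛ : 0 < Λ) (hdS : 0 < dS) (hγ : 0 < γ) (hdI : 0 < dI) (hα : 0 < α) (hdV : 0 < dV)
    (f g f' g' : ℝ → ℝ)
    (hf : ∀ V ≥ (0:ℝ), HasDerivAt f (f' V) V)
    (hg : ∀ I ≥ (0:ℝ), HasDerivAt g (g' I) I)
    (hf0 : f 0 = 0) (hg0 : g 0 = 0)
    (hfpos : ∀ V > (0:ℝ), 0 < f V) (hgpos : ∀ I > (0:ℝ), 0 < g I)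
    (hf'pos : ∀ V ≥ (0:ℝ), 0 < f' V) (hg'pos : ∀ I ≥ (0:ℝ), 0 < g' I)
    (hfratio : AntitoneOn (fun V => f V / V) (Set.Ioi (0:ℝ)))
    (hgratio : AntitoneOn (fun I => g I / I) (Set.Ioi (0:ℝ)))
    (S₀ : ℝ) (hS₀ : S₀ = Λ / dS)
    (R₀ : ℝ)
    (hR₀ : R₀ = S₀ * α * f' 0 / (dV * (γ + dI)) + S₀ * g' 0 / (γ + dI))
    (hR₀gt : 1 < R₀) :
    ∃ Is ∈ Set.Ioo (0:ℝ) (Λ / (γ + dI)),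
      ((Λ - (γ + dI) * Is) / dS) * (f (α * Is / dV) + g Is) - (γ + dI) * Is = 0 := by
  set c : ℝ := γ + dI with hc
  have hcpos : 0 < c := by positivity
  set G : ℝ → ℝ := fun I => ((Λ - c * I) / dS) * (f (α * I / dV) + g I) - c * I with hGdef
  set M : ℝ := Λ / c with hM
  have hMpos : 0 < M := by positivity
  -- derivative of G everywhere on [0,∞)
  have hG : ∀ I ≥ (0:ℝ), HasDerivAt G
      ((-c/dS) * (f (α*I/dV) + g I) + ((Λ - c*I)/dS) * (f' (α*I/dV) * (α/dV) + g' I) - c) I := by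
    intro I hI
    have hin : HasDerivAt (fun J : ℝ => α * J / dV) (α / dV) I := by
      simpa using ((hasDerivAt_id I).const_mul α).div_const dV
    have hfc : HasDerivAt (fun J => f (α * J / dV)) (f' (α * I / dV) * (α / dV)) I :=
      (hf (α * I / dV) (by positivity)).comp I hin
    have hsum : HasDerivAt (fun J => f (α * J / dV) + g J)
        (f' (α * I / dV) * (α / dV) + g' I) I := hfc.add (hg I hI)
    have hlin : HasDerivAt (fun J : ℝ => (Λ - c * J) / dS) (-c / dS) I := by
      have h := ((hasDerivAt_id I).const_mul c).const_sub Λ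
      have := h.div_const dS
      simpa [neg_div] using this
    have hmul := hlin.mul hsum
    have hcI : HasDerivAt (fun J : ℝ => c * J) c I := by
      simpa using (hasDerivAt_id I).const_mul c
    have := hmul.sub hcI
    exact this
  have hG0 : G 0 = 0 := by simp [hGdef, hf0, hg0]
  -- derivative at 0 is positive
  have hD0 : HasDerivAt G ((Λ/dS) * (f' 0 * (α/dV) + g' 0) - c) 0 := by
    have := hG 0 le_rfl
    simpa [hf0, hg0] using this
  have hDpos : 0 < (Λ/dS) * (f' 0 * (α/dV) + g' 0) - c := by
    have key : (Λ/dS) * (f' 0 * (α/dV) + g' 0) - c = c * (R₀ - 1) := by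
      rw [hR₀, hS₀, hc]
      field_simp
    rw [key]
    have : 0 < R₀ - 1 := by linarith
    positivity
  -- find a point x ∈ (0, M) where G x > 0
  have hslope : Filter.Tendsto (slope G 0) (nhdsWithin 0 {(0:ℝ)}ᶜ)
      (nhds ((Λ/dS) * (f' 0 * (α/dV) + g' 0) - c)) :=
    hasDerivAt_iff_tendsto_slope.mp hD0
  have hslope' : Filter.Tendsto (slope G 0) (nhdsWithin 0 (Set.Ioi 0))
      (nhds ((Λ/dS) * (f' 0 * (α/dV) + g' 0) - c)) :=
    hslope.mono_left (nhdsWithin_mono 0 (fun x hx => ne_of_gt hx))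
  have hev : ∀ᶠ x in nhdsWithin 0 (Set.Ioi 0), 0 < slope G 0 x :=
    hslope'.eventually (eventually_gt_nhds hDpos)
  have hev2 : ∀ᶠ x in nhdsWithin 0 (Set.Ioi 0), x < M :=
    eventually_nhdsWithin_of_eventually_nhds (eventually_lt_nhds hMpos)
  have hev3 : ∀ᶠ x in nhdsWithin 0 (Set.Ioi 0), x ∈ Set.Ioi (0:ℝ) :=
    eventually_mem_nhdsWithin
  obtain ⟨x, hx1, hx2, hx3⟩ := (hev.and (hev2.and hev3)).exists
  have hxpos : 0 < x := hx3
  have hGx : 0 < G x := by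
    have : slope G 0 x = G x / x := by simp [slope_def_field, hG0]
    rw [this] at hx1
    have := mul_pos hx1 hxpos
    rwa [div_mul_cancel₀ _ (ne_of_gt hxpos)] at this
  -- G M < 0
  have hGM : G M = -Λ := by
    have h1 : Λ - c * M = 0 := by
      rw [hM]; field_simp
      ring
    simp [hGdef, hM, h1]
    field_simp
    ring
  -- IVT
  have hcont : ContinuousOn G (Set.Icc x M) := fun y hy =>
    ((hG y (le_trans hxpos.le hy.1)).continuousAt).continuousWithinAt
  have hxM : x ≤ M := hx2.le
  have hsub := intermediate_value_Ioo' hxM hcont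
  have h0mem : (0:ℝ) ∈ Set.Ioo (G M) (G x) := ⟨by rw [hGM]; linarith, hGx⟩
  obtain ⟨Is, hIs, hIsG⟩ := hsub h0mem
  exact ⟨Is, ⟨lt_trans hxpos hIs.1, hIs.2⟩, hIsG⟩
end

section
/- With the notation of the endemic equilibrium: suppose S*, I*, V* > 0 satisfy S*f(V*) + S*g(I*) = (γ+d_I)I* and αI* = d_V V*, where f,g are differentiable, positive on (0,∞), and satisfy V f'(V) ≤ f(V) and I g'(I) ≤ g(I) for all V, I > 0. Define G(I) = ((Λ - (γ+d_I)I)/d_S)·(f(αI/d_V) + g(I)) - (γ+d_I)I with S* = (Λ - (γ+d_I)I*)/d_S. Then G'(I*) < 0. -/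
/-- At an endemic equilibrium the equilibrium function G satisfies
G'(I*) < 0, which yields uniqueness of the positive equilibrium. -/
theorem endemic_equilibrium_deriv_neg
    (Λ dS γ dI α dV : ℝ)
    (hΛ : 0 < Λ) (hdS : 0 < dS) (hγ : 0 < γ) (hdI : 0 < dI) (hα : 0 < α) (hdV : 0 < dV)
    (f g f' g' : ℝ → ℝ)
    (hf : ∀ V > (0:ℝ), HasDerivAt f (f' V) V)
    (hg : ∀ I > (0:ℝ), HasDerivAt g (g' I) I)
    (hfpos : ∀ V > (0:ℝ), 0 < f V) (hgpos : ∀ I > (0:ℝ), 0 < g I)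
    (hfsub : ∀ V > (0:ℝ), V * f' V ≤ f V)
    (hgsub : ∀ I > (0:ℝ), I * g' I ≤ g I)
    (Ss Is Vs : ℝ) (hSs : 0 < Ss) (hIs : 0 < Is) (hVs : 0 < Vs)
    (heqS : Ss = (Λ - (γ + dI) * Is) / dS)
    (heq1 : Ss * f Vs + Ss * g Is = (γ + dI) * Is)
    (heq2 : α * Is = dV * Vs) :
    deriv (fun I => ((Λ - (γ + dI) * I) / dS) * (f (α * I / dV) + g I) - (γ + dI) * I)
      Is < 0 := by
  have hVeq : α * Is / dV = Vs := by field_simp; linarith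
  have hinner : HasDerivAt (fun I : ℝ => α * I / dV) (α / dV) Is := by
    simpa using ((hasDerivAt_id Is).const_mul α).div_const dV
  have hfVs := hf Vs hVs
  rw [← hVeq] at hfVs
  have hcomp : HasDerivAt (fun I : ℝ => f (α * I / dV)) (f' Vs * (α / dV)) Is := by
    have := hfVs.comp Is hinner
    rw [hVeq] at this
    exact this
  have hlin : HasDerivAt (fun I : ℝ => (Λ - (γ + dI) * I) / dS) (-((γ + dI) * 1) / dS) Is := by
    exact (((hasDerivAt_id Is).const_mul (γ + dI)).const_sub Λ).div_const dS
  have hG := (hlin.mul (hcomp.add (hg Is hIs))).sub ((hasDerivAt_id Is).const_mul (γ + dI))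
  simp only [id_eq, Pi.add_apply] at hG
  rw [hVeq] at hG
  rw [(show HasDerivAt (fun I => ((Λ - (γ + dI) * I) / dS) * (f (α * I / dV) + g I) - (γ + dI) * I) _ Is from hG).deriv]
  -- now show the explicit derivative is negative
  have hfp := hfpos Vs hVs
  have hgp := hgpos Is hIs
  have hfs := hfsub Vs hVs
  have hgs := hgsub Is hIs
  have hSval : Ss = (Λ - (γ + dI) * Is) / dS := heqS
  have hSdS : Ss * dS = Λ - (γ + dI) * Is := by
    rw [hSval]; field_simp
  have hVI : Vs = α * Is / dV := hVeq.symm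
  -- key bound: Ss * (f' Vs * (α / dV) + g' Is) ≤ γ + dI
  have hkey : Ss * (f' Vs * (α / dV) + g' Is) ≤ γ + dI := by
    have hαdV : α / dV = Vs / Is := by
      rw [div_eq_div_iff hdV.ne' hIs.ne']; linarith
    rw [hαdV, ← mul_le_mul_iff_left₀ hIs]
    have h : Ss * (f' Vs * (Vs / Is) + g' Is) * Is = Ss * (Vs * f' Vs) + Ss * (Is * g' Is) := by
      field_simp
    rw [h]
    nlinarith [mul_le_mul_of_nonneg_left hfs hSs.le, mul_le_mul_of_nonneg_left hgs hSs.le]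
  have hneg : -((γ + dI) * 1) / dS * (f Vs + g Is) < 0 :=
    mul_neg_of_neg_of_pos (div_neg_of_neg_of_pos (by nlinarith) hdS) (by nlinarith)
  have : (Λ - (γ + dI) * Is) / dS = Ss := hSval.symm
  calc -((γ + dI) * 1) / dS * (f Vs + g Is) +
        (Λ - (γ + dI) * Is) / dS * (f' Vs * (α / dV) + g' Is) - (γ + dI) * 1
      = -((γ + dI) * 1) / dS * (f Vs + g Is) + Ss * (f' Vs * (α / dV) + g' Is) - (γ + dI) := by
        rw [this]; ring
    _ < 0 := by nlinarith
end

section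
/- Under the endemic equilibrium relations S*f(V*) + S*g(I*) = (γ+d_I)I* and αI* = d_V V*, and the sublinearity conditions f'(V*) ≤ f(V*)/V* and g'(I*) ≤ g(I*)/I*, the following bounds hold: αS*f'(V*) ≤ (γ+d_I)d_V · f(V*)/(f(V*)+g(I*)) and S*g'(I*) ≤ (γ+d_I) · g(I*)/(f(V*)+g(I*)). -/
/-- Bounds used in the Routh–Hurwitz verification at the endemic equilibrium. -/
theorem endemic_sublinearity_bounds
    (γ dI dV α : ℝ) (hγ : 0 < γ) (hdI : 0 < dI) (hdV : 0 < dV) (hα : 0 < α)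
    (Ss Is Vs fVs gIs f'Vs g'Is : ℝ)
    (hSs : 0 < Ss) (hIs : 0 < Is) (hVs : 0 < Vs)
    (hfVs : 0 < fVs) (hgIs : 0 < gIs)
    (heq1 : Ss * fVs + Ss * gIs = (γ + dI) * Is)
    (heq2 : α * Is = dV * Vs)
    (hfsub : f'Vs ≤ fVs / Vs)
    (hgsub : g'Is ≤ gIs / Is) :
    α * Ss * f'Vs ≤ (γ + dI) * dV * (fVs / (fVs + gIs)) ∧
      Ss * g'Is ≤ (γ + dI) * (gIs / (fVs + gIs)) := by
  have hsum : 0 < fVs + gIs := by linarith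
  constructor
  · have h1 : α * Ss * f'Vs ≤ α * Ss * (fVs / Vs) := by
      apply mul_le_mul_of_nonneg_left hfsub (by positivity)
    have h2 : α * Ss * (fVs / Vs) = (γ + dI) * dV * (fVs / (fVs + gIs)) := by
      field_simp
      linear_combination α*heq1 + (γ+dI)*heq2
    linarith
  · have h1 : Ss * g'Is ≤ Ss * (gIs / Is) := by
      apply mul_le_mul_of_nonneg_left hgsub hSs.le
    have h2 : Ss * (gIs / Is) = (γ + dI) * (gIs / (fVs + gIs)) := by
      field_simp
      linear_combination heq1
    linarith
end

section
/- Let (S_n)_{n=-1}^{M+1} be positive reals satisfying the discrete Neumann boundary conditions S_{-1} = S_0 and S_{M+1} = S_M, and let S* > 0. Then Σ_{n=0}^{M} [ (S_{n+1} - 2S_n + S_{n-1}) - S*·(S_{n+1}/S_n - 2 + S_{n-1}/S_n) ] ≤ 0. -/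
lemma tele_sum (S : ℤ → ℝ) : ∀ M : ℕ,
    ∑ n ∈ Finset.range (M + 1), (S ((n : ℤ) + 1) - 2 * S (n : ℤ) + S ((n : ℤ) - 1))
      = S ((M : ℤ) + 1) - S (M : ℤ) + (S (-1) - S 0) := by
  intro M
  induction M with
  | zero => simp; ring
  | succ K ih =>
      rw [Finset.sum_range_succ, ih]
      push_cast
      ring

lemma two_le_div_add (a b : ℝ) (ha : 0 < a) (hb : 0 < b) : 2 ≤ a / b + b / a := by
  rw [div_add_div _ _ hb.ne' ha.ne', le_div_iff₀ (by positivity)]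
  nlinarith [sq_nonneg (a - b)]

lemma ratio_sum (S : ℤ → ℝ) : ∀ M : ℕ,
    (∀ n : ℤ, -1 ≤ n → n ≤ (M : ℤ) + 1 → 0 < S n) →
    S ((M : ℤ) + 1) / S (M : ℤ) - 1 + (S (-1) / S 0 - 1)
      ≤ ∑ n ∈ Finset.range (M + 1), (S ((n : ℤ) + 1) / S (n : ℤ) - 2 + S ((n : ℤ) - 1) / S (n : ℤ)) := by
  intro M
  induction M with
  | zero =>
      intro _; simp; ring_nf; exact le_rfl
  | succ K ih =>
      intro hpos
      have hpos' : ∀ n : ℤ, -1 ≤ n → n ≤ (K : ℤ) + 1 → 0 < S n := by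
        intro n h1 h2
        exact hpos n h1 (by push_cast; linarith)
      have ihK := ih hpos'
      rw [Finset.sum_range_succ]
      have hK : 0 < S (K : ℤ) := hpos _ (by omega) (by push_cast; linarith)
      have hK1 : 0 < S ((K : ℤ) + 1) := hpos _ (by omega) (by push_cast; linarith)
      have key : 2 ≤ S ((K : ℤ) + 1) / S (K : ℤ) + S (K : ℤ) / S ((K : ℤ) + 1) :=
        two_le_div_add _ _ hK1 hK
      push_cast
      have h2 : ((K : ℤ) + 1 - 1) = (K : ℤ) := by ring
      rw [h2]
      linarith [ihK, key]

/-- Discrete Laplacian estimate under Neumann boundary conditions. -/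
theorem discrete_laplacian_lyapunov_nonpos
    (M : ℕ) (S : ℤ → ℝ) (Ss : ℝ) (hSs : 0 < Ss)
    (hpos : ∀ n : ℤ, -1 ≤ n → n ≤ (M : ℤ) + 1 → 0 < S n)
    (hbc0 : S (-1) = S 0) (hbcM : S ((M : ℤ) + 1) = S (M : ℤ)) :
    ∑ n ∈ Finset.range (M + 1),
        ((S ((n : ℤ) + 1) - 2 * S (n : ℤ) + S ((n : ℤ) - 1)) -
          Ss * (S ((n : ℤ) + 1) / S (n : ℤ) - 2 + S ((n : ℤ) - 1) / S (n : ℤ))) ≤ 0 := by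
  have h0 : 0 < S 0 := hpos 0 (by norm_num) (by omega)
  have hM : 0 < S (M : ℤ) := hpos _ (by omega) (by linarith)
  rw [Finset.sum_sub_distrib, ← Finset.mul_sum, tele_sum]
  have hr := ratio_sum S M hpos
  rw [hbc0, hbcM] at hr ⊢
  rw [div_self hM.ne', div_self h0.ne'] at hr
  nlinarith [hr]
end

section
/- Let Λ, β₁, β₂, d_S, γ, d_I, α, d_V > 0 and define R₀ = Λαβ₁/(d_S d_V(γ+d_I)) + Λβ₂/(d_S(γ+d_I)). If R₀ > 1, then the triple S* = Λ/(d_S R₀), I* = Λ(1 - 1/R₀)/(γ+d_I), V* = αΛ(1 - 1/R₀)/(d_V(γ+d_I)) consists of positive numbers and satisfies the equilibrium equations: Λ - β₁S*V* - β₂S*I* - d_S S* = 0, β₁S*V* + β₂S*I* - (γ+d_I)I* = 0, and αI* - d_V V* = 0. -/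
/-- Explicit endemic equilibrium for the bilinear-incidence model. -/
theorem bilinear_endemic_equilibrium
    (Λ β₁ β₂ dS γ dI α dV : ℝ)
    (hΛ : 0 < Λ) (hβ₁ : 0 < β₁) (hβ₂ : 0 < β₂) (hdS : 0 < dS) (hγ : 0 < γ)
    (hdI : 0 < dI) (hα : 0 < α) (hdV : 0 < dV)
    (R₀ : ℝ)
    (hR₀ : R₀ = Λ * α * β₁ / (dS * dV * (γ + dI)) + Λ * β₂ / (dS * (γ + dI)))
    (hR₀gt : 1 < R₀)
    (Ss Is Vs : ℝ)
    (hSs : Ss = Λ / (dS * R₀))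
    (hIs : Is = Λ * (1 - 1 / R₀) / (γ + dI))
    (hVs : Vs = α * Λ * (1 - 1 / R₀) / (dV * (γ + dI))) :
    0 < Ss ∧ 0 < Is ∧ 0 < Vs ∧
      Λ - β₁ * Ss * Vs - β₂ * Ss * Is - dS * Ss = 0 ∧
      β₁ * Ss * Vs + β₂ * Ss * Is - (γ + dI) * Is = 0 ∧
      α * Is - dV * Vs = 0 := by
  have hR0 : (0:ℝ) < R₀ := lt_trans one_pos hR₀gt
  have hR0ne : R₀ ≠ 0 := ne_of_gt hR0
  have hγdI : (0:ℝ) < γ + dI := by linarith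
  have hγdIne : γ + dI ≠ 0 := ne_of_gt hγdI
  have hfrac : 0 < 1 - 1 / R₀ := by
    have : 1 / R₀ < 1 := by rw [div_lt_one hR0]; exact hR₀gt
    linarith
  have hR₀' : R₀ * (dS * dV * (γ + dI)) = Λ * α * β₁ + Λ * β₂ * dV := by
    rw [hR₀]; field_simp
  have h1 : Λ - β₁ * Ss * Vs - β₂ * Ss * Is - dS * Ss = 0 := by
    rw [hSs, hIs, hVs]
    field_simp
    linear_combination (Λ * (R₀ - 1)) * hR₀'
  have hsum : Λ - dS * Ss - (γ + dI) * Is = 0 := by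
    rw [hSs, hIs]
    field_simp
    ring
  refine ⟨?_, ?_, ?_, h1, ?_, ?_⟩
  · rw [hSs]; positivity
  · rw [hIs]; positivity
  · rw [hVs]; positivity
  · linear_combination hsum - h1
  · rw [hIs, hVs]
    field_simp
    ring
end

section
/- Let Λ, β₁, β₂, d_S, γ, d_I, α, d_V > 0 with R₀ = Λαβ₁/(d_S d_V(γ+d_I)) + Λβ₂/(d_S(γ+d_I)) ≤ 1. If (S, I, V) with S, I, V ≥ 0 satisfies Λ - β₁SV - β₂SI - d_S S = 0, β₁SV + β₂SI - (γ+d_I)I = 0, and αI - d_V V = 0, then (S, I, V) = (Λ/d_S, 0, 0). -/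
/-- When R₀ ≤ 1, the disease-free equilibrium is the only nonnegative
equilibrium of the bilinear-incidence model. -/
theorem dfe_unique_of_R0_le_one
    (Λ β₁ β₂ dS γ dI α dV : ℝ)
    (hΛ : 0 < Λ) (hβ₁ : 0 < β₁) (hβ₂ : 0 < β₂) (hdS : 0 < dS) (hγ : 0 < γ)
    (hdI : 0 < dI) (hα : 0 < α) (hdV : 0 < dV)
    (hR₀ : Λ * α * β₁ / (dS * dV * (γ + dI)) + Λ * β₂ / (dS * (γ + dI)) ≤ 1)
    (S I V : ℝ) (hS : 0 ≤ S) (hI : 0 ≤ I) (hV : 0 ≤ V)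
    (heq1 : Λ - β₁ * S * V - β₂ * S * I - dS * S = 0)
    (heq2 : β₁ * S * V + β₂ * S * I - (γ + dI) * I = 0)
    (heq3 : α * I - dV * V = 0) :
    S = Λ / dS ∧ I = 0 ∧ V = 0 := by
  have hγdI : 0 < γ + dI := by linarith
  have hden1 : 0 < dS * dV * (γ + dI) := by positivity
  have hden2 : 0 < dS * (γ + dI) := by positivity
  -- cleared R₀ condition
  have hR : Λ * α * β₁ + Λ * β₂ * dV ≤ dS * dV * (γ + dI) := by
    have h2 : Λ * β₂ / (dS * (γ + dI)) = Λ * β₂ * dV / (dS * dV * (γ + dI)) := by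
      field_simp
    rw [h2, ← add_div, div_le_one hden1] at hR₀
    linarith
  have hV' : dV * V = α * I := by linarith
  have hI0 : I = 0 := by
    by_contra hne
    have hIp : 0 < I := lt_of_le_of_ne hI (Ne.symm hne)
    have hVp : 0 < V := by
      have : dV * V = α * I := hV'
      nlinarith
    have hSp : 0 < S := by
      rcases lt_or_eq_of_le hS with h | h
      · exact h
      · exfalso; rw [← h] at heq1; nlinarith
    -- S < Λ/dS, i.e. dS*S < Λ
    have hSlt : dS * S < Λ := by nlinarith [mul_pos (mul_pos hβ₁ hSp) hVp]
    -- from heq2: S*(β₁*α + β₂*dV) = (γ+dI)*dV  (after multiplying by dV and dividing by I)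
    have key : S * (β₁ * α + β₂ * dV) * I = (γ + dI) * dV * I := by
      linear_combination dV * heq2 - β₁ * S * hV'
    have key2 : S * (β₁ * α + β₂ * dV) = (γ + dI) * dV :=
      mul_right_cancel₀ hne key
    -- but R₀ ≤ 1 gives Λ*(β₁*α+β₂*dV) ≤ dS*dV*(γ+dI), and dS*S < Λ ⇒ contradiction
    have hpos : 0 < β₁ * α + β₂ * dV := by positivity
    nlinarith [mul_lt_mul_of_pos_right hSlt hpos]
  have hV0 : V = 0 := by
    have : dV * V = 0 := by rw [hV', hI0]; ring
    exact (mul_eq_zero.mp this).resolve_left (ne_of_gt hdV) 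
  refine ⟨?_, hI0, hV0⟩
  rw [hI0, hV0] at heq1
  field_simp
  linarith
end

section
/- Let S₀, S, I, V, f0, g0 > 0 and parameters γ, d_I, d_V, α, d_S > 0. Set B = (γ + d_I - S₀g0)/α and assume γ + d_I > S₀g0 (which holds when R₀₂ = S₀g0/(γ+d_I) < 1). Then for any S > 0 and any F ≤ f0·V, G ≤ g0·I (with F, G ≥ 0): (1 - S₀/S)(Λ - SF - SG - d_S S) + (SF + SG - (γ+d_I)I) + B(αI - d_V V) ≤ -(d_S/S)(S₀ - S)² + (d_V(γ+d_I)/α)(R₀ - 1)V, where Λ = d_S S₀ and R₀ = S₀αf0/(d_V(γ+d_I)) + S₀g0/(γ+d_I). -/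
/-- Pointwise reaction-term estimate in the Lyapunov proof of global
stability of the disease-free equilibrium. -/
theorem dfe_lyapunov_reaction_estimate
    (S₀ S I V f0 g0 γ dI dV α dS : ℝ)
    (hS₀ : 0 < S₀) (hS : 0 < S) (hI : 0 < I) (hV : 0 < V)
    (hf0 : 0 < f0) (hg0 : 0 < g0)
    (hγ : 0 < γ) (hdI : 0 < dI) (hdV : 0 < dV) (hα : 0 < α) (hdS : 0 < dS)
    (hgap : S₀ * g0 < γ + dI)
    (B Λ R₀ : ℝ)
    (hB : B = (γ + dI - S₀ * g0) / α)
    (hΛ : Λ = dS * S₀)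
    (hR₀ : R₀ = S₀ * α * f0 / (dV * (γ + dI)) + S₀ * g0 / (γ + dI))
    (F G : ℝ) (hF0 : 0 ≤ F) (hG0 : 0 ≤ G)
    (hF : F ≤ f0 * V) (hG : G ≤ g0 * I) :
    (1 - S₀ / S) * (Λ - S * F - S * G - dS * S) + (S * F + S * G - (γ + dI) * I) +
        B * (α * I - dV * V) ≤
      -(dS / S) * (S₀ - S) ^ 2 + (dV * (γ + dI) / α) * (R₀ - 1) * V := by
  have hSne := hS.ne'
  have hαne := hα.ne'
  have hγdI : (0:ℝ) < γ + dI := by linarith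
  have hkey : (dV * (γ + dI) / α) * (R₀ - 1) = S₀ * f0 - dV * B := by
    subst hB hR₀; field_simp; ring
  have hL : (1 - S₀ / S) * (Λ - S * F - S * G - dS * S) + (S * F + S * G - (γ + dI) * I) +
        B * (α * I - dV * V)
      = -(dS / S) * (S₀ - S) ^ 2 + (S₀ * f0 - dV * B) * V
        - S₀ * (f0 * V - F) - S₀ * (g0 * I - G) := by
    subst hB hΛ; field_simp; ring
  rw [hkey, hL]
  nlinarith [mul_nonneg hS₀.le (sub_nonneg.2 hF), mul_nonneg hS₀.le (sub_nonneg.2 hG)]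
end

section
/- Let Φ(x) = x - 1 - ln x. For positive reals S, S*, I, I*, V, V*, F, F*, G, G* (abbreviating F = f(V), F* = f(V*), G = g(I), G* = g(I*)) satisfying the equilibrium relations d_S S* + S*F* + S*G* = Λ and S*F* + S*G* = (γ+d_I)I*, αI* = d_V V*, the reaction term (1 - S*/S)(Λ - SF - SG - d_S S) + (1 - I*/I)(SF + SG - (γ+d_I)I) + (S*F*/(d_V V*))(1 - V*/V)(αI - d_V V) equals -(d_S/S)(S - S*)² - S*G*[Φ(S*/S) + Φ(SGI*/(S*G*I)) + Φ(I/I*) - Φ(G/G*)] - S*F*[Φ(S*/S) + Φ(SFI*/(S*F*I)) + Φ(V*I/(VI*)) + Φ(V/V*) - Φ(F/F*)]. -/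
/-- Exact algebraic identity for the reaction term of the Lyapunov
functional at the endemic equilibrium, with Φ(x) = x - 1 - ln x. -/
theorem endemic_lyapunov_identity
    (Φ : ℝ → ℝ) (hΦ : ∀ x, Φ x = x - 1 - Real.log x)
    (Λ dS γ dI α dV : ℝ)
    (hΛ : 0 < Λ) (hdS : 0 < dS) (hγ : 0 < γ) (hdI : 0 < dI) (hα : 0 < α) (hdV : 0 < dV)
    (S Ss I Is V Vs F Fs G Gs : ℝ)
    (hS : 0 < S) (hSs : 0 < Ss) (hI : 0 < I) (hIs : 0 < Is) (hV : 0 < V) (hVs : 0 < Vs)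
    (hF : 0 < F) (hFs : 0 < Fs) (hG : 0 < G) (hGs : 0 < Gs)
    (heqΛ : dS * Ss + Ss * Fs + Ss * Gs = Λ)
    (heqI : Ss * Fs + Ss * Gs = (γ + dI) * Is)
    (heqV : α * Is = dV * Vs) :
    (1 - Ss / S) * (Λ - S * F - S * G - dS * S) +
        (1 - Is / I) * (S * F + S * G - (γ + dI) * I) +
        (Ss * Fs / (dV * Vs)) * (1 - Vs / V) * (α * I - dV * V) =
      -(dS / S) * (S - Ss) ^ 2 -
        Ss * Gs * (Φ (Ss / S) + Φ (S * G * Is / (Ss * Gs * I)) + Φ (I / Is) - Φ (G / Gs)) -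
        Ss * Fs * (Φ (Ss / S) + Φ (S * F * Is / (Ss * Fs * I)) + Φ (Vs * I / (V * Is)) +
          Φ (V / Vs) - Φ (F / Fs)) := by
  have h1 : Real.log (Ss / S) + Real.log (S * G * Is / (Ss * Gs * I)) + Real.log (I / Is)
      - Real.log (G / Gs) = 0 := by
    rw [Real.log_div hSs.ne' hS.ne', Real.log_div (by positivity) (by positivity),
      Real.log_div hI.ne' hIs.ne', Real.log_div hG.ne' hGs.ne',
      Real.log_mul (by positivity) hIs.ne', Real.log_mul hS.ne' hG.ne',
      Real.log_mul (by positivity) hI.ne', Real.log_mul hSs.ne' hGs.ne']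
    ring
  have h2 : Real.log (Ss / S) + Real.log (S * F * Is / (Ss * Fs * I)) +
      Real.log (Vs * I / (V * Is)) + Real.log (V / Vs) - Real.log (F / Fs) = 0 := by
    rw [Real.log_div hSs.ne' hS.ne', Real.log_div (by positivity) (by positivity),
      Real.log_div (by positivity) (by positivity), Real.log_div hV.ne' hVs.ne',
      Real.log_div hF.ne' hFs.ne',
      Real.log_mul (by positivity) hIs.ne', Real.log_mul hS.ne' hF.ne',
      Real.log_mul (by positivity) hI.ne', Real.log_mul hSs.ne' hFs.ne',
      Real.log_mul hVs.ne' hI.ne', Real.log_mul hV.ne' hIs.ne']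
    ring
  have hg : Φ (Ss / S) + Φ (S * G * Is / (Ss * Gs * I)) + Φ (I / Is) - Φ (G / Gs) =
      Ss / S + S * G * Is / (Ss * Gs * I) + I / Is - G / Gs - 2 := by
    rw [hΦ, hΦ, hΦ, hΦ]; linarith [h1]
  have hf : Φ (Ss / S) + Φ (S * F * Is / (Ss * Fs * I)) + Φ (Vs * I / (V * Is)) +
      Φ (V / Vs) - Φ (F / Fs) =
      Ss / S + S * F * Is / (Ss * Fs * I) + Vs * I / (V * Is) + V / Vs - F / Fs - 3 := by
    rw [hΦ, hΦ, hΦ, hΦ, hΦ]; linarith [h2]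
  rw [hg, hf]
  have hγ' : γ = (Ss * Fs + Ss * Gs) / Is - dI := by
    field_simp
    linarith [heqI]
  have hVs' : Vs = α * Is / dV := by
    field_simp
    linarith [heqV]
  subst hγ' hVs' heqΛ
  field_simp
  ring
end
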